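/- arXiv:1606.00534 — 2 statements merged into one kernel-verified Lean document; each statement's English description precedes it below -/
import Mathlib

section
/- Let M ≥ 1 and N ≥ 1 be integers and let X_1, …, X_N be independent random variables, each uniformly distributed on {1, …, M}. For every k ∈ {1, …, M}, the conditional probability that the minimum min_i X_i is attained by a unique index, given that min_i X_i = k, equals N·(M − k)^{N−1}/((M − k + 1)^N − (M − k)^N). -/
/-!
The event `{min = k}` is `{all X i ≥ k} \ {all X i ≥ k + 1}`, so by independence it has
probability `((M - k + 1) / M) ^ N - ((M - k) / M) ^ N`. Within it, the minimum is attained once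
exactly when some `X i = k` while all other `X j ≥ k + 1`: a disjoint union over `i` of `N` events
of probability `(1 / M) * ((M - k) / M) ^ (N - 1)`. The factors `M⁻¹ ^ N` cancel in the quotient.
-/

open MeasureTheory ProbabilityTheory Finset Function
open scoped ENNReal

section MinimumOfNatValued

variable {ι : Type*} [Fintype ι] (hι : (univ : Finset ι).Nonempty) (f : ι → ℕ) (k : ℕ)

theorem univ_inf'_eq_iff :
    univ.inf' hι f = k ↔ (∀ i, k ≤ f i) ∧ ¬ ∀ i, k + 1 ≤ f i := by
  have hle : ∀ a, a ≤ univ.inf' hι f ↔ ∀ i, a ≤ f i := by simp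
  rw [← hle, ← hle]
  omega

theorem univ_inf'_eq_and_existsUnique_iff [DecidableEq ι] :
    (univ.inf' hι f = k ∧ ∃! i, f i = univ.inf' hι f) ↔
      ∃ i, ∀ j, f j ∈ update (fun _ => Set.Ici (k + 1)) i {k} j := by
  constructor
  · rintro ⟨hmin, i, hi, huniq⟩
    have hge : ∀ j, k ≤ f j := ((univ_inf'_eq_iff hι f k).1 hmin).1
    refine ⟨i, fun j => ?_⟩
    rcases eq_or_ne j i with rfl | hji
    · simpa [hmin] using hi
    · have : f j ≠ k := fun h => hji (huniq j (h.trans hmin.symm))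
      simp only [update_of_ne hji, Set.mem_Ici]
      have := hge j
      omega
  · rintro ⟨i, hi⟩
    have hfi : f i = k := by simpa using hi i
    have hgt : ∀ j, j ≠ i → k + 1 ≤ f j := fun j hji => by simpa [hji] using hi j
    have hmin : univ.inf' hι f = k := by
      refine (univ_inf'_eq_iff hι f k).2 ⟨fun j => ?_, fun h => by have := h i; omega⟩
      rcases eq_or_ne j i with rfl | hji
      · exact hfi.ge
      · have := hgt j hji
        omega
    refine ⟨hmin, i, hfi.trans hmin.symm, fun j hj => ?_⟩
    by_contra hji
    have := hgt j hji
    omega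

end MinimumOfNatValued

section MinimumEvents

variable {Ω ι : Type*} [Fintype ι] (hι : (univ : Finset ι).Nonempty) (X : ι → Ω → ℕ) (k : ℕ)

theorem setOf_univ_inf'_eq :
    {ω | univ.inf' hι (X · ω) = k} =
      (⋂ i, X i ⁻¹' Set.Ici k) \ ⋂ i, X i ⁻¹' Set.Ici (k + 1) := by
  ext ω
  exact (univ_inf'_eq_iff hι (X · ω) k).trans (by simp)

theorem setOf_univ_inf'_eq_inter_existsUnique [DecidableEq ι] :
    {ω | univ.inf' hι (X · ω) = k} ∩ {ω | ∃! i, X i ω = univ.inf' hι (X · ω)} =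
      ⋃ i, ⋂ j, X j ⁻¹' update (fun _ => Set.Ici (k + 1)) i {k} j := by
  ext ω
  exact (univ_inf'_eq_and_existsUnique_iff hι (X · ω) k).trans (by simp)

end MinimumEvents

section UpdatePreimages

variable {Ω ι β : Type*} {X : ι → Ω → β} {s t : Set β}

theorem pairwise_disjoint_iInter_preimage_update [DecidableEq ι] (hst : Disjoint s t) :
    Pairwise (Disjoint on fun i => ⋂ j, X j ⁻¹' update (fun _ => t) i s j) := by
  intro i i' hii'
  refine Set.disjoint_left.2 fun ω hω hω' => Set.disjoint_left.1 hst
    (show X i ω ∈ s by simpa using Set.mem_iInter.1 hω i)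
    (show X i ω ∈ t by simpa [hii'] using Set.mem_iInter.1 hω' i)

theorem measurableSet_update_const [MeasurableSpace β] [DecidableEq ι] (hs : MeasurableSet s)
    (ht : MeasurableSet t) (i j : ι) : MeasurableSet (update (fun _ => t) i s j) := by
  rw [update_apply]
  split_ifs <;> assumption

end UpdatePreimages

namespace ProbabilityTheory.iIndepFun

variable {Ω ι β : Type*} [MeasurableSpace Ω] [MeasurableSpace β] {μ : Measure Ω} [Fintype ι]
  {X : ι → Ω → β} {s t : Set β} {p q : ℝ≥0∞}

theorem measure_iInter_preimage_eq_pow (hX : iIndepFun X μ) (hs : MeasurableSet s)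
    (hp : ∀ i, μ (X i ⁻¹' s) = p) : μ (⋂ i, X i ⁻¹' s) = p ^ Fintype.card ι := by
  rw [hX.meas_iInter fun i => ⟨s, hs, rfl⟩]
  simp [hp]

theorem measure_iInter_preimage_update [DecidableEq ι] (hX : iIndepFun X μ)
    (hs : MeasurableSet s) (ht : MeasurableSet t) (hp : ∀ i, μ (X i ⁻¹' s) = p)
    (hq : ∀ i, μ (X i ⁻¹' t) = q) (i : ι) :
    μ (⋂ j, X j ⁻¹' update (fun _ => t) i s j) = p * q ^ (Fintype.card ι - 1) := by
  rw [hX.meas_iInter fun j => ⟨_, measurableSet_update_const hs ht i j, rfl⟩]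
  simp_rw [apply_update (fun j u => μ (X j ⁻¹' u)), hp, hq]
  rw [prod_update_of_mem (mem_univ i), prod_const, ← compl_eq_univ_sdiff, card_compl,
    card_singleton]

theorem measure_iUnion_iInter_preimage_update [DecidableEq ι] (hX : iIndepFun X μ)
    (hXm : ∀ i, Measurable (X i)) (hs : MeasurableSet s) (ht : MeasurableSet t)
    (hst : Disjoint s t) (hp : ∀ i, μ (X i ⁻¹' s) = p) (hq : ∀ i, μ (X i ⁻¹' t) = q) :
    μ (⋃ i, ⋂ j, X j ⁻¹' update (fun _ => t) i s j) =
      Fintype.card ι * (p * q ^ (Fintype.card ι - 1)) := by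
  have hmeas : ∀ i, MeasurableSet (⋂ j, X j ⁻¹' update (fun _ => t) i s j) := fun i =>
    .iInter fun j => hXm j (measurableSet_update_const hs ht i j)
  rw [measure_iUnion (pairwise_disjoint_iInter_preimage_update hst) hmeas, tsum_fintype]
  simp [hX.measure_iInter_preimage_update hs ht hp hq]

end ProbabilityTheory.iIndepFun

section MinimumOfIndependent

variable {Ω ι : Type*} [MeasurableSpace Ω] {μ : Measure Ω} [Fintype ι]
  (hι : (univ : Finset ι).Nonempty) {X : ι → Ω → ℕ} {k : ℕ} {p q : ℝ≥0∞}

theorem measurableSet_setOf_univ_inf'_eq (hXm : ∀ i, Measurable (X i)) :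
    MeasurableSet {ω | univ.inf' hι (X · ω) = k} := by
  rw [setOf_univ_inf'_eq]
  exact (MeasurableSet.iInter fun i => hXm i measurableSet_Ici).diff
    (.iInter fun i => hXm i measurableSet_Ici)

theorem ProbabilityTheory.iIndepFun.measure_setOf_univ_inf'_eq [IsFiniteMeasure μ]
    (hX : iIndepFun X μ) (hXm : ∀ i, Measurable (X i))
    (hp : ∀ i, μ (X i ⁻¹' Set.Ici k) = p)
    (hq : ∀ i, μ (X i ⁻¹' Set.Ici (k + 1)) = q) :
    μ {ω | univ.inf' hι (X · ω) = k} = p ^ Fintype.card ι - q ^ Fintype.card ι := by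
  rw [setOf_univ_inf'_eq, measure_sdiff
    (Set.iInter_mono fun i => Set.preimage_mono (Set.Ici_subset_Ici.2 k.le_succ))
    (MeasurableSet.iInter fun i => hXm i measurableSet_Ici).nullMeasurableSet (measure_ne_top _ _),
    hX.measure_iInter_preimage_eq_pow measurableSet_Ici hp,
    hX.measure_iInter_preimage_eq_pow measurableSet_Ici hq]

theorem ProbabilityTheory.iIndepFun.measure_setOf_univ_inf'_eq_inter_existsUnique
    [DecidableEq ι] (hX : iIndepFun X μ) (hXm : ∀ i, Measurable (X i))
    (hp : ∀ i, μ (X i ⁻¹' {k}) = p) (hq : ∀ i, μ (X i ⁻¹' Set.Ici (k + 1)) = q) :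
    μ ({ω | univ.inf' hι (X · ω) = k} ∩ {ω | ∃! i, X i ω = univ.inf' hι (X · ω)}) =
      Fintype.card ι * (p * q ^ (Fintype.card ι - 1)) := by
  rw [setOf_univ_inf'_eq_inter_existsUnique]
  exact hX.measure_iUnion_iInter_preimage_update hXm (measurableSet_singleton k) measurableSet_Ici
    (by simp) hp hq

end MinimumOfIndependent

theorem measure_preimage_eq_of_map_eq_uniformOfFinset {Ω α : Type*} [MeasurableSpace Ω]
    [MeasurableSpace α] {μ : Measure Ω} {f : Ω → α} (hf : Measurable f) {s : Finset α}
    {hs : s.Nonempty} (hmap : μ.map f = (PMF.uniformOfFinset s hs).toMeasure) {t : Set α}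
    (ht : MeasurableSet t) [DecidablePred (· ∈ t)] :
    μ (f ⁻¹' t) = #{x ∈ s | x ∈ t} / #s := by
  rw [← Measure.map_apply hf ht, hmap]
  convert PMF.toMeasure_uniformOfFinset_apply hs t ht

theorem Nat.card_filter_Icc_mem_Ici {a b j : ℕ} (hj : a ≤ j) :
    #{x ∈ Icc a b | x ∈ Set.Ici j} = b + 1 - j := by
  rw [← Nat.card_Icc]
  congr 1
  ext x
  simp only [mem_filter, mem_Icc, Set.mem_Ici]
  omega

theorem Nat.card_filter_Icc_mem_singleton {a b k : ℕ} (hk : k ∈ Icc a b) :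
    #{x ∈ Icc a b | x ∈ ({k} : Set ℕ)} = 1 := by
  rw [card_eq_one]
  exact ⟨k, by ext x; simp only [mem_filter, Set.mem_singleton_iff, mem_singleton]; grind⟩

theorem ENNReal.natCast_mul_div_pow_sub_div_pow {N : ℕ} (hN : N ≠ 0) {a b m : ℝ≥0∞}
    (hm0 : m ≠ 0) (hm : m ≠ ⊤) :
    N * (1 / m * (b / m) ^ (N - 1)) / ((a / m) ^ N - (b / m) ^ N) =
      N * b ^ (N - 1) / (a ^ N - b ^ N) := by
  have hmN : (m⁻¹) ^ N ≠ ⊤ := ENNReal.pow_ne_top (ENNReal.inv_ne_top.2 hm0)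
  have hmN0 : (m⁻¹) ^ N ≠ 0 := pow_ne_zero _ (ENNReal.inv_ne_zero.2 hm)
  simp only [div_eq_mul_inv _ m, one_mul, mul_pow, ← ENNReal.sub_mul fun _ _ => hmN]
  have hnum : N * (m⁻¹ * (b ^ (N - 1) * m⁻¹ ^ (N - 1))) = N * b ^ (N - 1) * m⁻¹ ^ N := by
    rw [← pow_sub_one_mul hN]
    ring
  rw [hnum, ENNReal.mul_div_mul_right _ _ hmN0 hmN]

/-- Conditional probability of a collision-free contention given that the first occupied
mini-slot is `k`: if `X 1, …, X N` are independent and each uniformly distributed on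
`{1, …, M}`, then for `k ∈ {1, …, M}`, the conditional probability that the minimum
`min_i X_i` is attained by a unique index, given `min_i X_i = k`, equals
`N (M - k)^{N-1} / ((M - k + 1)^N - (M - k)^N)`. -/
theorem stmt_10 {Ω : Type*} [MeasurableSpace Ω] (μ : Measure Ω) [IsProbabilityMeasure μ]
    (M N : ℕ) (hM : 1 ≤ M) (hN : 1 ≤ N)
    (X : Fin N → Ω → ℕ)
    (hmeas : ∀ i, Measurable (X i))
    (hunif : ∀ i, μ.map (X i) =
      (PMF.uniformOfFinset (Finset.Icc 1 M) (Finset.nonempty_Icc.mpr hM)).toMeasure)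
    (hindep : iIndepFun X μ)
    (k : ℕ) (hk1 : 1 ≤ k) (hkM : k ≤ M) :
    ProbabilityTheory.cond μ
        {ω | Finset.univ.inf' ⟨⟨0, hN⟩, Finset.mem_univ _⟩ (fun i => X i ω) = k}
        {ω | ∃! i, X i ω = Finset.univ.inf' ⟨⟨0, hN⟩, Finset.mem_univ _⟩ (fun j => X j ω)} =
      (N : ℝ≥0∞) * ((M - k : ℕ) : ℝ≥0∞) ^ (N - 1) /
        (((M - k + 1 : ℕ) : ℝ≥0∞) ^ N - ((M - k : ℕ) : ℝ≥0∞) ^ N) := by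
  have hIci (j : ℕ) (hj : 1 ≤ j) (i : Fin N) :
      μ (X i ⁻¹' Set.Ici j) = (M + 1 - j : ℕ) / M := by
    rw [measure_preimage_eq_of_map_eq_uniformOfFinset (hmeas i) (hunif i) measurableSet_Ici,
      Nat.card_filter_Icc_mem_Ici hj, Nat.card_Icc, Nat.add_sub_cancel]
  have hsingleton (i : Fin N) : μ (X i ⁻¹' {k}) = 1 / M := by
    rw [measure_preimage_eq_of_map_eq_uniformOfFinset (hmeas i) (hunif i)
      (measurableSet_singleton k), Nat.card_filter_Icc_mem_singleton (mem_Icc.2 ⟨hk1, hkM⟩),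
      Nat.card_Icc, Nat.add_sub_cancel, Nat.cast_one]
  -- retypes the anonymous-constructor proof in the statement as `univ.Nonempty`, so `rw` matches
  set hι : (univ : Finset (Fin N)).Nonempty := ⟨⟨0, hN⟩, mem_univ _⟩
  rw [cond_apply (measurableSet_setOf_univ_inf'_eq hι hmeas), ← ENNReal.div_eq_inv_mul,
    hindep.measure_setOf_univ_inf'_eq_inter_existsUnique hι hmeas hsingleton
      (hIci (k + 1) (by omega)),
    hindep.measure_setOf_univ_inf'_eq hι hmeas (hIci k hk1) (hIci (k + 1) (by omega)),
    Fintype.card_fin, show M + 1 - k = M - k + 1 by omega, show M + 1 - (k + 1) = M - k by omega]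
  exact ENNReal.natCast_mul_div_pow_sub_div_pow (by omega) (Nat.cast_ne_zero.2 (by omega)) (by simp)
end

section
/- For integers M ≥ 1, N ≥ 1 and k ∈ {1, …, M}, define P_k = N·(M − k)^{N−1}/((M − k + 1)^N − (M − k)^N). Then the sequence (P_k)_{k=1}^M is monotonically decreasing: P_{k+1} ≤ P_k for all 1 ≤ k ≤ M − 1. -/
/-!
Writing `f x = x ^ n / ((x + 1) ^ (n + 1) - x ^ (n + 1))` with `n = N - 1`, we have
`P_k = N f (M - k)`, so it suffices that `f` is monotone on `[0, ∞)`. Expanding both differences of powers as geometric sums, the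
cross-multiplied inequality `f a ≤ f b` for `0 ≤ a ≤ b` holds term by term, each term reducing to
`a (b + 1) ≤ b (a + 1)`.
-/

open Finset

lemma add_one_pow_succ_sub_pow_succ {R : Type*} [CommRing R] (x : R) (n : ℕ) :
    (x + 1) ^ (n + 1) - x ^ (n + 1) = ∑ i ∈ range (n + 1), (x + 1) ^ i * x ^ (n - i) := by
  simpa using (geom_sum₂_mul (x + 1) x (n + 1)).symm

lemma pow_mul_add_one_pow_succ_sub_le {R : Type*} [CommRing R] [LinearOrder R]
    [IsStrictOrderedRing R] {a b : R} (ha : 0 ≤ a) (hab : a ≤ b) (n : ℕ) :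
    a ^ n * ((b + 1) ^ (n + 1) - b ^ (n + 1)) ≤ b ^ n * ((a + 1) ^ (n + 1) - a ^ (n + 1)) := by
  have hb : 0 ≤ b := ha.trans hab
  rw [add_one_pow_succ_sub_pow_succ, add_one_pow_succ_sub_pow_succ, mul_sum, mul_sum]
  refine sum_le_sum fun i hi => ?_
  obtain ⟨j, rfl⟩ := Nat.exists_eq_add_of_le' (Nat.lt_succ_iff.mp (mem_range.mp hi))
  rw [Nat.add_sub_cancel]
  have hcross : a ^ i * (b + 1) ^ i ≤ b ^ i * (a + 1) ^ i := by
    simpa only [mul_pow] using pow_le_pow_left₀ (by positivity : 0 ≤ a * (b + 1))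
      (by nlinarith : a * (b + 1) ≤ b * (a + 1)) i
  calc a ^ (j + i) * ((b + 1) ^ i * b ^ j)
      = (a * b) ^ j * (a ^ i * (b + 1) ^ i) := by ring
    _ ≤ (a * b) ^ j * (b ^ i * (a + 1) ^ i) := mul_le_mul_of_nonneg_left hcross (by positivity)
    _ = b ^ (j + i) * ((a + 1) ^ i * a ^ j) := by ring

lemma pow_div_add_one_pow_succ_sub_monotoneOn {K : Type*} [Field K] [LinearOrder K]
    [IsStrictOrderedRing K] (n : ℕ) :
    MonotoneOn (fun x : K => x ^ n / ((x + 1) ^ (n + 1) - x ^ (n + 1))) (Set.Ici 0) := by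
  intro a ha b hb hab
  have hden {x : K} (hx : 0 ≤ x) : 0 < (x + 1) ^ (n + 1) - x ^ (n + 1) :=
    sub_pos.mpr (pow_lt_pow_left₀ (lt_add_one x) hx n.succ_ne_zero)
  rw [div_le_div_iff₀ (hden ha) (hden hb)]
  exact pow_mul_add_one_pow_succ_sub_le (Set.mem_Ici.mp ha) hab n

theorem stmt_11_general (M N : ℕ) :
    ∀ k : ℕ, 1 ≤ k → k + 1 ≤ M →
      (N : ℝ) * ((M : ℝ) - ((k : ℝ) + 1)) ^ (N - 1) /
          (((M : ℝ) - ((k : ℝ) + 1) + 1) ^ N - ((M : ℝ) - ((k : ℝ) + 1)) ^ N) ≤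
        (N : ℝ) * ((M : ℝ) - (k : ℝ)) ^ (N - 1) /
          (((M : ℝ) - (k : ℝ) + 1) ^ N - ((M : ℝ) - (k : ℝ)) ^ N) := by
  intro k _ hkM
  cases N with
  | zero => simp
  | succ n =>
    set a : ℝ := (M : ℝ) - ((k : ℝ) + 1)
    have ha : 0 ≤ a := sub_nonneg.mpr (by exact_mod_cast hkM)
    rw [show (M : ℝ) - k = a + 1 by ring, Nat.add_sub_cancel, mul_div_assoc, mul_div_assoc]
    exact mul_le_mul_of_nonneg_left
      (pow_div_add_one_pow_succ_sub_monotoneOn n ha (Set.mem_Ici.mpr (by linarith)) (by linarith))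
      (Nat.cast_nonneg _)

/-- Monotonicity part of Lemma 5: the sequence
`P_k = N (M - k)^{N-1} / ((M - k + 1)^N - (M - k)^N)`, `k = 1, …, M`,
is monotonically decreasing. -/
theorem stmt_11 (M N : ℕ) (hM : 1 ≤ M) (hN : 1 ≤ N) :
    ∀ k : ℕ, 1 ≤ k → k + 1 ≤ M →
      (N : ℝ) * ((M : ℝ) - ((k : ℝ) + 1)) ^ (N - 1) /
          (((M : ℝ) - ((k : ℝ) + 1) + 1) ^ N - ((M : ℝ) - ((k : ℝ) + 1)) ^ N) ≤
        (N : ℝ) * ((M : ℝ) - (k : ℝ)) ^ (N - 1) /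
          (((M : ℝ) - (k : ℝ) + 1) ^ N - ((M : ℝ) - (k : ℝ)) ^ N) :=
  stmt_11_general M N
end
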